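/- If $k \in L^1(\mathbb{R}^d)$ satisfies $|k|*|f| \leq Mf$ almost everywhere for all simple functions $f : \mathbb{R}^d \to \mathbb{C}$, then $\|k\|_{L^1(\mathbb{R}^d)} \leq 1$. -/

import Mathlib

open MeasureTheory ENNReal

/-- An axis-parallel cube in `ℝ^d`. -/
def IsCube {d : ℕ} (Q : Set (EuclideanSpace ℝ (Fin d))) : Prop :=
  ∃ (a : Fin d → ℝ) (r : ℝ), 0 < r ∧ Q = {x | ∀ i, x i ∈ Set.Icc (a i) (a i + r)}

/-- Average of (the nonnegative part of) `w` over a set `Q`. -/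
noncomputable def cubeAvg {d : ℕ} (Q : Set (EuclideanSpace ℝ (Fin d)))
    (w : EuclideanSpace ℝ (Fin d) → ℝ) : ℝ≥0∞ :=
  (∫⁻ x in Q, ENNReal.ofReal (w x)) / volume Q

/-- The Muckenhoupt `A_p` characteristic `[w]_{A_p}`, with `p' = p/(p-1)`. -/
noncomputable def ApConst (d : ℕ) (p : ℝ) (w : EuclideanSpace ℝ (Fin d) → ℝ) : ℝ≥0∞ :=
  ⨆ Q : {Q : Set (EuclideanSpace ℝ (Fin d)) // IsCube Q},
    cubeAvg Q.1 w * (cubeAvg Q.1 (fun x => w x ^ (1 - p / (p - 1)))) ^ (p - 1)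

/-- A weight on `ℝ^d`: a locally integrable, everywhere positive function. -/
def IsWeight {d : ℕ} (w : EuclideanSpace ℝ (Fin d) → ℝ) : Prop :=
  (∀ x, 0 < w x) ∧ LocallyIntegrable w volume

/-- The (uncentered, over cubes) Hardy–Littlewood maximal operator. -/
noncomputable def maximalOp {d : ℕ} (f : EuclideanSpace ℝ (Fin d) → ℂ)
    (x : EuclideanSpace ℝ (Fin d)) : ℝ≥0∞ :=
  ⨆ Q : {Q : Set (EuclideanSpace ℝ (Fin d)) // IsCube Q ∧ x ∈ Q},
    (∫⁻ y in Q.1, ‖f y‖₊) / volume Q.1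

/-- The class `𝒦` of integrable kernels `k` with `|k| * |f| ≤ M f` a.e. for
all simple `f : ℝ^d → ℂ`. -/
def MemK {d : ℕ} (k : EuclideanSpace ℝ (Fin d) → ℝ) : Prop :=
  Integrable k ∧ ∀ f : SimpleFunc (EuclideanSpace ℝ (Fin d)) ℂ,
    ∀ᵐ x, (∫⁻ y, ENNReal.ofReal |k (x - y)| * ‖f y‖₊) ≤ maximalOp (⇑f) x

/-!
Testing the hypothesis on the indicator of a measurable set `s`, whose maximal function is at
most `1`, gives `∫_s |k (x - y)| dy ≤ 1` for almost every `x`. Fixing one `x` that works for all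
closed balls of integer radius about `0`, monotone convergence and translation invariance of
Lebesgue measure give `‖k‖₁ ≤ 1`.
-/

theorem lintegral_le_of_forall_setLIntegral_closedBall_le {α : Type*} [PseudoMetricSpace α]
    [MeasurableSpace α] {μ : Measure α} {g : α → ℝ≥0∞} {c : ℝ≥0∞} (a : α)
    (h : ∀ n : ℕ, ∫⁻ y in Metric.closedBall a n, g y ∂μ ≤ c) : ∫⁻ y, g y ∂μ ≤ c := by
  have hdir : Directed (· ⊆ ·) fun n : ℕ => Metric.closedBall a n :=
    Monotone.directed_le fun m n hmn => Metric.closedBall_subset_closedBall (by exact_mod_cast hmn)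
  rw [← setLIntegral_univ, ← Metric.iUnion_closedBall_nat a, setLIntegral_iUnion_of_directed _ hdir]
  exact iSup_le h

section

variable {d : ℕ}

theorem maximalOp_le_one {f : EuclideanSpace ℝ (Fin d) → ℂ} (hf : ∀ y, ‖f y‖ ≤ 1)
    (x : EuclideanSpace ℝ (Fin d)) : maximalOp f x ≤ 1 := by
  refine iSup_le fun Q => ENNReal.div_le_of_le_mul ?_
  calc ∫⁻ y in Q.1, ‖f y‖₊ ≤ ∫⁻ _ in Q.1, 1 := lintegral_mono fun y => by
        rw [ENNReal.coe_le_one_iff, ← NNReal.coe_le_one, coe_nnnorm]; exact hf y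
    _ = 1 * volume Q.1 := by rw [setLIntegral_one, one_mul]

theorem MemK.ae_setLIntegral_le_one {k : EuclideanSpace ℝ (Fin d) → ℝ} (hk : MemK k)
    {s : Set (EuclideanSpace ℝ (Fin d))} (hs : MeasurableSet s) :
    ∀ᵐ x, ∫⁻ y in s, ENNReal.ofReal |k (x - y)| ≤ 1 := by
  set f := (SimpleFunc.const _ (1 : ℂ)).restrict s
  have hf : ∀ y, f y = s.indicator 1 y := fun y => by simp [f, SimpleFunc.restrict_apply _ hs]
  filter_upwards [hk.2 f] with x hx
  calc ∫⁻ y in s, ENNReal.ofReal |k (x - y)|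
      = ∫⁻ y, ENNReal.ofReal |k (x - y)| * ‖f y‖₊ := by
        rw [← lintegral_indicator hs]
        refine lintegral_congr fun y => ?_
        by_cases hy : y ∈ s <;> simp [hf, hy]
    _ ≤ maximalOp f x := hx
    _ ≤ 1 := maximalOp_le_one (fun y => by by_cases hy : y ∈ s <;> simp [hf, hy]) x

end

/-- If `k ∈ 𝒦` then `‖k‖_{L¹(ℝ^d)} ≤ 1`. -/
theorem memK_norm_le_one (d : ℕ) (k : EuclideanSpace ℝ (Fin d) → ℝ)
    (hk : MemK k) : ∫⁻ x, ‖k x‖₊ ≤ 1 := by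
  have hballs : ∀ᵐ x, ∀ n : ℕ, ∫⁻ y in Metric.closedBall 0 n, ENNReal.ofReal |k (x - y)| ≤ 1 :=
    ae_all_iff.2 fun n => hk.ae_setLIntegral_le_one Metric.isClosed_closedBall.measurableSet
  obtain ⟨x, hx⟩ := hballs.exists
  calc ∫⁻ y, ‖k y‖₊ = ∫⁻ y, ENNReal.ofReal |k (x - y)| := by
        simp_rw [← enorm_eq_nnnorm, Real.enorm_eq_ofReal_abs]
        exact (lintegral_sub_left_eq_self (fun y => ENNReal.ofReal |k y|) x).symm
    _ ≤ 1 := lintegral_le_of_forall_setLIntegral_closedBall_le 0 hx
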